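/- arXiv:1107.1091 — 2 statements merged into one kernel-verified Lean document; each statement's English description precedes it below -/
import Mathlib

section
/- Let δ: L₁ → L₂ and ρ: M₁ → M₂ be branched coverings of finite laminations on the circle C = ℝ/2πℤ, both of the same degree d ≥ 1, and let s₁: C → C be a rotation (translation of C) which carries every equivalence class of L₁ onto an equivalence class of M₁ and whose inverse carries classes of M₁ to classes of L₁. Then there exists a unique rotation s₂: C → C such that s₂ ∘ δ = ρ ∘ s₁; moreover s₂ carries every class of L₂ onto a class of M₂. -/
open Set MeasureTheory Filter Topology

noncomputable section

/-- The circle `ℝ/2πℤ`. -/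
abbrev Circle2pi : Type := AddCircle (2 * Real.pi)

instance : Fact ((0 : ℝ) < 2 * Real.pi) := ⟨by positivity⟩

/-- A finite lamination on the circle `ℝ/2πℤ`: an equivalence relation whose classes are
finite, all but finitely many of which are singletons, and whose distinct classes are
unlinked (equivalent pairs from distinct classes lie in a common connected component of the
complement of the other pair). -/
structure FiniteLamination where
  rel : Circle2pi → Circle2pi → Prop
  iseqv : Equivalence rel
  class_finite : ∀ x, {y | rel x y}.Finite
  nontrivial_finite : {x | ∃ y, rel x y ∧ y ≠ x}.Finite
  unlinked : ∀ a b c d : Circle2pi, rel a b → rel c d → ¬ rel a c → a ≠ b → c ≠ d →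
    b ∈ connectedComponentIn ({c, d}ᶜ : Set Circle2pi) a

/-- The equivalence class of `x` under the lamination `L`. -/
def FiniteLamination.cls (L : FiniteLamination) (x : Circle2pi) : Set Circle2pi :=
  {y | L.rel x y}

/-- `a` and `b` are adjacent (consecutive) in the cyclic order of the set `A`:
both belong to `A`, are distinct, and one of the two open arcs bounded by `a` and `b`
(i.e. one of the connected components of the complement of `{a, b}`) contains no point of `A`. -/
def AdjacentIn (A : Set Circle2pi) (a b : Circle2pi) : Prop :=
  a ∈ A ∧ b ∈ A ∧ a ≠ b ∧
    ∃ x ∈ ({a, b}ᶜ : Set Circle2pi),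
      connectedComponentIn ({a, b}ᶜ : Set Circle2pi) x ∩ A = ∅

/-- A branched covering of finite laminations: an affine degree `d ≥ 1` map
`t ↦ d • t + c` of the circle carrying each `L₁`-class exactly onto an `L₂`-class and
preserving consecutivity of points of a class whenever the image class is nontrivial. -/
structure LamBranchedCover (L₁ L₂ : FiniteLamination) where
  deg : ℕ
  deg_pos : 1 ≤ deg
  shift : Circle2pi
  maps_cls : ∀ x : Circle2pi,
    (fun t => deg • t + shift) '' L₁.cls x = L₂.cls (deg • x + shift)
  consecutive : ∀ x a b : Circle2pi,
    ¬ ((fun t => deg • t + shift) '' L₁.cls x).Subsingleton →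
    AdjacentIn (L₁.cls x) a b →
    AdjacentIn ((fun t => deg • t + shift) '' L₁.cls x) (deg • a + shift) (deg • b + shift)

/-- The underlying circle map of a branched covering of laminations. -/
def LamBranchedCover.map {L₁ L₂ : FiniteLamination} (δ : LamBranchedCover L₁ L₂) :
    Circle2pi → Circle2pi := fun t => δ.deg • t + δ.shift

/-- The set `S` is unlinked with every pair of `L`-equivalent points lying in a
nontrivial class. -/
def UnlinkedSet (L : FiniteLamination) (S : Set Circle2pi) : Prop :=
  ∀ a ∈ S, ∀ b ∈ S, ∀ c d : Circle2pi, L.rel c d → c ≠ d →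
    b ∈ connectedComponentIn ({c, d}ᶜ : Set Circle2pi) a

/-- A gap of the lamination `L`: a maximal open subset of the circle every pair of whose
points is unlinked with every pair of `L`-equivalent points in a nontrivial class. -/
def IsGapOf (L : FiniteLamination) (G : Set Circle2pi) : Prop :=
  IsOpen G ∧ G.Nonempty ∧ UnlinkedSet L G ∧
    ∀ G' : Set Circle2pi, IsOpen G' → UnlinkedSet L G' → G ⊆ G' → G = G'

/-! Since `ℝ/2πℤ` is divisible, a branched covering `δ` is surjective, so `s₂ ∘ δ = ρ ∘ s₁`
determines `s₂`; for equal degrees `d`, rotating by `d • c₁ + ρ.shift - δ.shift` is a solution.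
Every `L₂`-class is the `δ`-image of an `L₁`-class, so `s₂` carries it to the `ρ`-image of an
`M₁`-class, which is an `M₂`-class. -/

theorem AddCircle.surjective_nsmul_add {p : ℝ} [Fact (0 < p)] {n : ℕ} (hn : n ≠ 0)
    (c : AddCircle p) : Function.Surjective fun t : AddCircle p => n • t + c := by
  intro y
  obtain ⟨t, ht⟩ := DivisibleBy.surjective_smul (AddCircle p) ℤ
    (Int.natCast_ne_zero.mpr hn) (y - c)
  exact ⟨t, by simp only [← natCast_zsmul, ht, sub_add_cancel]⟩

namespace LamBranchedCover

variable {L₁ L₂ M₁ M₂ : FiniteLamination}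

theorem map_surjective (δ : LamBranchedCover L₁ L₂) : Function.Surjective δ.map :=
  AddCircle.surjective_nsmul_add (by have := δ.deg_pos; omega) δ.shift

theorem image_cls (δ : LamBranchedCover L₁ L₂) (x : Circle2pi) :
    δ.map '' L₁.cls x = L₂.cls (δ.map x) :=
  δ.maps_cls x

theorem map_add_of_deg_eq (δ : LamBranchedCover L₁ L₂) (ρ : LamBranchedCover M₁ M₂)
    (hdeg : δ.deg = ρ.deg) (t c : Circle2pi) :
    ρ.map (t + c) = δ.map t + (ρ.deg • c + ρ.shift - δ.shift) := by
  simp only [map, hdeg, smul_add]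
  abel

theorem exists_image_cls_eq_of_comp_eq (δ : LamBranchedCover L₁ L₂)
    (ρ : LamBranchedCover M₁ M₂) {s₁ s₂ : Circle2pi → Circle2pi}
    (hcomm : s₂ ∘ δ.map = ρ.map ∘ s₁) (hfwd : ∀ x, ∃ z, s₁ '' L₁.cls x = M₁.cls z)
    (y : Circle2pi) : ∃ w, s₂ '' L₂.cls y = M₂.cls w := by
  obtain ⟨x, rfl⟩ := δ.map_surjective y
  obtain ⟨z, hz⟩ := hfwd x
  refine ⟨ρ.map z, ?_⟩
  rw [← δ.image_cls, ← image_comp, hcomm, image_comp, hz, ρ.image_cls]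

end LamBranchedCover

open LamBranchedCover in
theorem lamination_cover_determined_by_domain_and_degree_general
    (L₁ L₂ M₁ M₂ : FiniteLamination)
    (δ : LamBranchedCover L₁ L₂) (ρ : LamBranchedCover M₁ M₂)
    (hdeg : δ.deg = ρ.deg)
    (s₁ : Circle2pi → Circle2pi) (hrot : ∃ c : Circle2pi, ∀ t, s₁ t = t + c)
    (hfwd : ∀ x : Circle2pi, ∃ z : Circle2pi, s₁ '' L₁.cls x = M₁.cls z) :
    (∃! s₂ : Circle2pi → Circle2pi,
        (∃ c : Circle2pi, ∀ t, s₂ t = t + c) ∧ s₂ ∘ δ.map = ρ.map ∘ s₁) ∧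
      ∀ s₂ : Circle2pi → Circle2pi,
        (∃ c : Circle2pi, ∀ t, s₂ t = t + c) → s₂ ∘ δ.map = ρ.map ∘ s₁ →
        ∀ y : Circle2pi, ∃ w : Circle2pi, s₂ '' L₂.cls y = M₂.cls w := by
  obtain ⟨c₁, hc₁⟩ := hrot
  set c₂ := ρ.deg • c₁ + ρ.shift - δ.shift
  have hcomm : (· + c₂) ∘ δ.map = ρ.map ∘ s₁ :=
    funext fun t => by simp only [Function.comp_apply, hc₁, map_add_of_deg_eq δ ρ hdeg, c₂]
  refine ⟨⟨(· + c₂), ⟨⟨c₂, fun _ => rfl⟩, hcomm⟩, fun s hs => ?_⟩,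
    fun s₂ _ hs₂ => exists_image_cls_eq_of_comp_eq δ ρ hs₂ hfwd⟩
  exact δ.map_surjective.injective_comp_right (hs.2.trans hcomm.symm)

/-- Given branched coverings `δ : L₁ → L₂` and `ρ : M₁ → M₂` of the same
degree and a rotation `s₁` of the circle carrying classes of `L₁` onto classes of `M₁`
(and whose inverse carries classes of `M₁` to classes of `L₁`), there exists a unique
rotation `s₂` with `s₂ ∘ δ = ρ ∘ s₁`; moreover any such `s₂` carries every class of `L₂`
onto a class of `M₂`. -/
theorem lamination_cover_determined_by_domain_and_degree
    (L₁ L₂ M₁ M₂ : FiniteLamination)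
    (δ : LamBranchedCover L₁ L₂) (ρ : LamBranchedCover M₁ M₂)
    (hdeg : δ.deg = ρ.deg)
    (s₁ : Circle2pi → Circle2pi) (hrot : ∃ c : Circle2pi, ∀ t, s₁ t = t + c)
    (hfwd : ∀ x : Circle2pi, ∃ z : Circle2pi, s₁ '' L₁.cls x = M₁.cls z)
    (hbwd : ∀ z : Circle2pi, ∃ x : Circle2pi, s₁ ⁻¹' M₁.cls z = L₁.cls x) :
    (∃! s₂ : Circle2pi → Circle2pi,
        (∃ c : Circle2pi, ∀ t, s₂ t = t + c) ∧ s₂ ∘ δ.map = ρ.map ∘ s₁) ∧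
      ∀ s₂ : Circle2pi → Circle2pi,
        (∃ c : Circle2pi, ∀ t, s₂ t = t + c) → s₂ ∘ δ.map = ρ.map ∘ s₁ →
        ∀ y : Circle2pi, ∃ w : Circle2pi, s₂ '' L₂.cls y = M₂.cls w :=
  lamination_cover_determined_by_domain_and_degree_general L₁ L₂ M₁ M₂ δ ρ hdeg s₁ hrot hfwd

end
end

section
/- Let f ∈ ℂ[X] be a polynomial of degree d ≥ 2. Then for every z ∈ ℂ the limit G_f(z) := lim_{n→∞} d^{−n} · log⁺|fⁿ(z)| exists (as a finite nonnegative real number), and the resulting function G_f: ℂ → [0,∞) satisfies the functional equation G_f(f(z)) = d · G_f(z) for all z ∈ ℂ. -/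
open Filter Topology Bornology

noncomputable section

/-!
With `L w = log (max ‖w‖ 1)`, the defect `L (f w) - d * L w` is continuous and tends to
`log ‖leadingCoeff f‖` at infinity, since `f w / w ^ d = (reverse f) w⁻¹`; hence it is bounded on
`ℂ`. Consecutive terms of `d⁻ⁿ * L (fⁿ z)` then differ by `O(d⁻ⁿ)`, so the sequence is Cauchy,
and the functional equation is the index shift `n ↦ n + 1`.
-/

namespace Polynomial

variable {K : Type*} [NormedField K]

theorem tendsto_eval_div_pow_natDegree_cobounded (f : K[X]) :
    Tendsto (fun w => f.eval w / w ^ f.natDegree) (cobounded K) (𝓝 f.leadingCoeff) := by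
  have h_reverse : ∀ᶠ w in cobounded K, f.reverse.eval w⁻¹ = f.eval w / w ^ f.natDegree := by
    filter_upwards [eventually_ne_cobounded 0] with w hw
    let := invertibleOfNonzero hw
    rw [eq_div_iff (pow_ne_zero _ hw), ← invOf_eq_inv, eval, eval, eval₂_reverse_mul_pow]
  rw [← coeff_zero_reverse, coeff_zero_eq_eval_zero]
  exact ((f.reverse.continuous.tendsto 0).comp tendsto_inv₀_cobounded).congr' h_reverse

theorem exists_abs_log_max_norm_eval_sub_le [ProperSpace K] (f : K[X]) (hf : 0 < f.natDegree) :
    ∃ C : ℝ, ∀ w : K,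
      |Real.log (max ‖f.eval w‖ 1) - f.natDegree * Real.log (max ‖w‖ 1)| ≤ C := by
  set h : K → ℝ := fun w => Real.log (max ‖f.eval w‖ 1) - f.natDegree * Real.log (max ‖w‖ 1)
  have h_cont : Continuous h := by
    have hpos : ∀ {x : ℝ}, max x 1 ≠ 0 := fun {x} => (zero_lt_one.trans_le (le_max_right x 1)).ne'
    exact ((f.continuous.norm.max continuous_const).log fun _ => hpos).sub
      (continuous_const.mul ((continuous_norm.max continuous_const).log fun _ => hpos))
  have h_eventually : ∀ᶠ w in cobounded K, Real.log ‖f.eval w / w ^ f.natDegree‖ = h w := by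
    filter_upwards [tendsto_norm_cobounded_atTop.eventually_ge_atTop 1,
      (f.tendsto_norm_atTop (natDegree_pos_iff_degree_pos.mp hf)
        tendsto_norm_cobounded_atTop).eventually_ge_atTop 1] with w hw hfw
    have hw0 : ‖w‖ ≠ 0 := (zero_lt_one.trans_le hw).ne'
    change _ = Real.log (max ‖f.eval w‖ 1) - f.natDegree * Real.log (max ‖w‖ 1)
    rw [max_eq_left hfw, max_eq_left hw, norm_div, norm_pow,
      Real.log_div (zero_lt_one.trans_le hfw).ne' (pow_ne_zero _ hw0), Real.log_pow]
  have h_tendsto : Tendsto h (cobounded K) (𝓝 (Real.log ‖f.leadingCoeff‖)) :=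
    (f.tendsto_eval_div_pow_natDegree_cobounded.norm.log
      (norm_ne_zero_iff.mpr (leadingCoeff_ne_zero.mpr (ne_zero_of_natDegree_gt hf)))).congr'
      h_eventually
  have h_bdd : IsBounded (Set.range h) := by
    rw [h_cont.isBounded_range_iff_isBigO, ← Metric.cobounded_eq_cocompact]
    exact h_tendsto.isBigO_one ℝ
  obtain ⟨C, hC⟩ := isBounded_iff_forall_norm_le.mp h_bdd
  exact ⟨C, fun w => hC (h w) ⟨w, rfl⟩⟩

end Polynomial

section IterateRenormalization

variable {X : Type*} (g : X → X) (φ : X → ℝ) {d C : ℝ}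

theorem cauchySeq_iterate_div_pow (hd : 1 < d) (hφ : ∀ x, |φ (g x) - d * φ x| ≤ C) (x : X) :
    CauchySeq fun n => φ (g^[n] x) / d ^ n := by
  have hd0 : 0 < d := one_pos.trans hd
  refine cauchySeq_of_le_geometric d⁻¹ (C / d) (inv_lt_one_of_one_lt₀ hd) fun n => ?_
  have h_step : φ (g^[n + 1] x) / d ^ (n + 1) - φ (g^[n] x) / d ^ n =
      (φ (g (g^[n] x)) - d * φ (g^[n] x)) / d ^ (n + 1) := by
    rw [Function.iterate_succ_apply']
    field_simp
    ring
  calc dist (φ (g^[n] x) / d ^ n) (φ (g^[n + 1] x) / d ^ (n + 1))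
      = |φ (g (g^[n] x)) - d * φ (g^[n] x)| / d ^ (n + 1) := by
        rw [Real.dist_eq, abs_sub_comm, h_step, abs_div, abs_of_pos (pow_pos hd0 _)]
    _ ≤ C / d ^ (n + 1) := by gcongr; exact hφ _
    _ = C / d * d⁻¹ ^ n := by rw [inv_pow, pow_succ']; field_simp

theorem exists_tendsto_iterate_div_pow (hd : 1 < d) (hφ : ∀ x, |φ (g x) - d * φ x| ≤ C) :
    ∃ G : X → ℝ, (∀ x, Tendsto (fun n => φ (g^[n] x) / d ^ n) atTop (𝓝 (G x))) ∧
      ∀ x, G (g x) = d * G x := by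
  have h_lim x := (cauchySeq_iterate_div_pow g φ hd hφ x).tendsto_limUnder
  refine ⟨fun x => limUnder atTop fun n => φ (g^[n] x) / d ^ n, h_lim, fun x => ?_⟩
  have h_shift :
      (fun n => φ (g^[n] (g x)) / d ^ n) = fun n => d * (φ (g^[n + 1] x) / d ^ (n + 1)) := by
    have hd0 : d ≠ 0 := (one_pos.trans hd).ne'
    ext n
    rw [Function.iterate_succ_apply, pow_succ]
    field_simp
  refine tendsto_nhds_unique (h_lim (g x)) ?_
  rw [h_shift]
  exact ((tendsto_add_atTop_iff_nat 1).mpr (h_lim x)).const_mul d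

end IterateRenormalization

/-- For a polynomial `f ∈ ℂ[X]` of degree `d ≥ 2`, the escape-rate
function `G_f(z) = lim_{n→∞} d⁻ⁿ · log⁺ |fⁿ(z)|` exists at every point as a finite
nonnegative real number, and it satisfies the functional equation
`G_f(f(z)) = d · G_f(z)` for all `z ∈ ℂ`.  Here `log⁺ x = max (log x) 0 = log (max x 1)`. -/
theorem escape_rate_exists_and_functional_equation
    (f : Polynomial ℂ) (d : ℕ) (hd : 2 ≤ d) (hdeg : f.natDegree = d) :
    ∃ G : ℂ → ℝ,
      (∀ z : ℂ, 0 ≤ G z) ∧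
      (∀ z : ℂ, Tendsto
        (fun n : ℕ => Real.log (max ‖(fun w : ℂ => f.eval w)^[n] z‖ 1) / (d : ℝ) ^ n)
        atTop (nhds (G z))) ∧
      (∀ z : ℂ, G (f.eval z) = d * G z) := by
  obtain ⟨C, hC⟩ := f.exists_abs_log_max_norm_eval_sub_le (by omega)
  rw [hdeg] at hC
  have hd' : (1 : ℝ) < d := by exact_mod_cast hd
  obtain ⟨G, hG_tendsto, hG_eq⟩ :=
    exists_tendsto_iterate_div_pow (fun w => f.eval w) (fun w => Real.log (max ‖w‖ 1)) hd' hC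
  refine ⟨G, fun z => ge_of_tendsto' (hG_tendsto z) fun n => ?_, hG_tendsto, hG_eq⟩
  exact div_nonneg (Real.log_nonneg (le_max_right _ _)) (by positivity)

end
end
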